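/- Let $F \in \mathrm{BMO}(\mathbb{R}^d)$ and let $e$ be a coordinate unit vector. Then the even extension $G = F\,\mathbf{1}_{\{x\cdot e > 0\}} + (F\,\mathbf{1}_{\{x\cdot e > 0\}})\circ\sigma_e$ of $F|_{\{x\cdot e > 0\}}$ belongs to $\mathrm{BMO}(\mathbb{R}^d)$ with $\|G\|_{*,\mathrm{BMO}} \le 2\|F\|_{*,\mathrm{BMO}}$, where $\|H\|_{*,\mathrm{BMO}} = \sup_Q \inf_{c\in\mathbb{C}} \frac{1}{|Q|}\int_Q |H - c|$, the supremum over all cubes $Q$ with sides parallel to the axes. -/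

import Mathlib

open MeasureTheory Filter Topology ENNReal

noncomputable section

/-- An open cube in `ℝ^d` with sides parallel to the coordinate axes. -/
structure Cube (d : ℕ) where
  corner : Fin d → ℝ
  side : ℝ
  side_pos : 0 < side

namespace Cube

variable {d : ℕ}

def toSet (Q : Cube d) : Set (Fin d → ℝ) :=
  {x | ∀ i, Q.corner i < x i ∧ x i < Q.corner i + Q.side}

/-- the volume `|Q| = l(Q)^d` -/
def vol (Q : Cube d) : ℝ := Q.side ^ d

/-- the concentric double `2Q` -/
def double (Q : Cube d) : Cube d :=
  ⟨fun i => Q.corner i - Q.side / 2, 2 * Q.side, by have := Q.side_pos; linarith⟩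

end Cube

/-- reflection in the coordinate hyperplane orthogonal to `e_j` -/
def reflCoord {d : ℕ} (j : Fin d) (x : Fin d → ℝ) : Fin d → ℝ :=
  Function.update x j (-(x j))

/-- the open half-space `{x : x·e_j > 0}` -/
def upperHS {d : ℕ} (j : Fin d) : Set (Fin d → ℝ) := {x | 0 < x j}

/-- classical `H¹`-atom supported in the cube `Q` -/
def IsAtomIn {d : ℕ} (a : (Fin d → ℝ) → ℂ) (Q : Cube d) : Prop :=
  MemLp a 2 volume ∧ (∀ x, x ∉ Q.toSet → a x = 0) ∧ (∫ x, a x = 0) ∧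
    eLpNorm a 2 volume ≤ ENNReal.ofReal (Real.sqrt Q.vol)⁻¹

def IsClassicalAtom {d : ℕ} (a : (Fin d → ℝ) → ℂ) : Prop := ∃ Q, IsAtomIn a Q

/-- an atomic decomposition of `F` (convergence of partial sums in `L¹`) -/
def H1Decomp {d : ℕ} (F : (Fin d → ℝ) → ℂ) (a : ℕ → (Fin d → ℝ) → ℂ) (lam : ℕ → ℝ) : Prop :=
  (∀ i, IsClassicalAtom (a i)) ∧ Summable lam ∧
    Tendsto (fun n => ∫ x, ‖(∑ i ∈ Finset.range n, (lam i : ℂ) * a i x) - F x‖) atTop (𝓝 0)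

/-- membership in the real Hardy space `H¹(ℝ^d)` via atomic decompositions -/
def MemH1 {d : ℕ} (F : (Fin d → ℝ) → ℂ) : Prop := ∃ a lam, H1Decomp F a lam

/-- the atomic `H¹` norm -/
def H1Norm {d : ℕ} (F : (Fin d → ℝ) → ℂ) : ℝ :=
  sInf {r | ∃ a lam, H1Decomp F a lam ∧ r = ∑' i, |lam i|}

/-- mean oscillation `inf_c |Q|⁻¹ ∫_Q |F - c|` -/
def osc {d : ℕ} (F : (Fin d → ℝ) → ℂ) (Q : Cube d) : ℝ :=
  sInf {r | ∃ c : ℂ, r = (Q.vol)⁻¹ * ∫ x in Q.toSet, ‖F x - c‖}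

/-- mean value of `|F|` over `Q` -/
def mvQ {d : ℕ} (F : (Fin d → ℝ) → ℂ) (Q : Cube d) : ℝ :=
  (Q.vol)⁻¹ * ∫ x in Q.toSet, ‖F x‖

/-- the mean `F_Q` -/
def meanOn {d : ℕ} (F : (Fin d → ℝ) → ℂ) (Q : Cube d) : ℂ :=
  (Q.vol : ℂ)⁻¹ * ∫ x in Q.toSet, F x

/-- `|Q|⁻¹ ∫_Q |F - F_Q|` -/
def oscMean {d : ℕ} (F : (Fin d → ℝ) → ℂ) (Q : Cube d) : ℝ :=
  (Q.vol)⁻¹ * ∫ x in Q.toSet, ‖F x - meanOn F Q‖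

/-- the `BMO` `*`-seminorm `sup_Q inf_c |Q|⁻¹∫_Q|F-c|` as an `ℝ≥0∞`-valued supremum -/
def BMOStar {d : ℕ} (F : (Fin d → ℝ) → ℂ) : ℝ≥0∞ :=
  ⨆ Q : Cube d, ENNReal.ofReal (osc F Q)

/-- the `BMO` norm `sup_Q |Q|⁻¹∫_Q|F-F_Q|` as an `ℝ≥0∞`-valued supremum -/
def BMONorm {d : ℕ} (F : (Fin d → ℝ) → ℂ) : ℝ≥0∞ :=
  ⨆ Q : Cube d, ENNReal.ofReal (oscMean F Q)

/-- the real-valued `BMO` norm (for functions known to be in `BMO`) -/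
def bmoSupMean {d : ℕ} (F : (Fin d → ℝ) → ℂ) : ℝ :=
  sSup {r | ∃ Q : Cube d, r = oscMean F Q}

/-- the local `bmo` `*`-norm with breaking point `a`:
`sup_{l(Q)<a} inf_c |Q|⁻¹∫_Q|F-c| + sup_{l(Q)≥a} |Q|⁻¹∫_Q|F|` -/
def bmoStarA {d : ℕ} (a : ℝ) (F : (Fin d → ℝ) → ℂ) : ℝ≥0∞ :=
  (⨆ Q : {Q : Cube d // Q.side < a}, ENNReal.ofReal (osc F Q.1)) +
  (⨆ Q : {Q : Cube d // a ≤ Q.side}, ENNReal.ofReal (mvQ F Q.1))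

/-- the Weyl chamber `ℝ^{d-k} × (0,∞)^k` -/
def chamber (d k : ℕ) : Set (Fin d → ℝ) :=
  {x | ∀ i : Fin d, d - k ≤ (i : ℕ) → 0 < x i}

/-- the group `{±1}^k` acting by sign changes on the last `k` coordinates -/
def signSet (d k : ℕ) : Finset (Fin d → Bool) :=
  Finset.univ.filter (fun s => ∀ i : Fin d, (i : ℕ) < d - k → s i = false)

def signAct {d : ℕ} (s : Fin d → Bool) (x : Fin d → ℝ) : Fin d → ℝ :=
  fun i => if s i then -x i else x i

/-- `ε^η = ∏ εᵢ^{ηᵢ}` -/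
def signChar {d : ℕ} (s η : Fin d → Bool) : ℝ :=
  ∏ i, if s i && η i then (-1 : ℝ) else 1

/-- the `η`-extension operator for the orthogonal root system `R_k` -/
def etaExt (d k : ℕ) (η : Fin d → Bool) (a : (Fin d → ℝ) → ℂ) : (Fin d → ℝ) → ℂ :=
  fun x => ∑ s ∈ signSet d k, ((signChar s η : ℝ) : ℂ) * a (signAct s x)

/-- `Reta d k η true  = ℝ^{η,1}_+` and `Reta d k η false = ℝ^{η,0}_+` -/
def Reta (d k : ℕ) (η : Fin d → Bool) (v : Bool) : Set (Fin d → ℝ) :=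
  {x | ∀ i : Fin d, d - k ≤ (i : ℕ) → η i = v → 0 < x i}

section Statement7Aux

open Set

variable {d : ℕ}

lemma cube_toSet_eq (Q : Cube d) :
    Q.toSet = Set.univ.pi (fun i => Set.Ioo (Q.corner i) (Q.corner i + Q.side)) := by
  ext x; simp [Cube.toSet, Set.mem_pi, Set.mem_Ioo]

lemma cube_measurableSet (Q : Cube d) : MeasurableSet Q.toSet := by
  rw [cube_toSet_eq]; exact MeasurableSet.univ_pi fun i => measurableSet_Ioo

lemma cube_vol_pos (Q : Cube d) : 0 < Q.vol := pow_pos Q.side_pos _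

lemma cube_volume (Q : Cube d) : volume Q.toSet = ENNReal.ofReal Q.vol := by
  rw [cube_toSet_eq, volume_pi_pi]
  simp only [Real.volume_Ioo, add_sub_cancel_left]
  rw [Finset.prod_const, Finset.card_univ, Fintype.card_fin,
    ← ENNReal.ofReal_pow Q.side_pos.le]
  rfl

lemma reflCoord_mp (j : Fin d) : MeasurePreserving (reflCoord j) volume volume := by
  have h : ∀ i : Fin d, MeasurePreserving (fun t : ℝ => if i = j then -t else t)
      volume volume := by
    intro i
    by_cases hi : i = j
    · simpa [hi] using Measure.measurePreserving_neg (volume : Measure ℝ)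
    · simp only [hi, ↓reduceIte]; exact MeasurePreserving.id volume
  have h2 := volume_preserving_pi h
  have heq : (fun (a : Fin d → ℝ) (i : Fin d) => if i = j then -(a i) else a i)
      = reflCoord j := by
    funext x i
    simp only [reflCoord, Function.update_apply]
    split_ifs with hij
    · subst hij; rfl
    · rfl
  rwa [heq] at h2

lemma reflCoord_involutive (j : Fin d) : Function.Involutive (reflCoord j) := by
  intro x
  funext i
  simp only [reflCoord, Function.update_apply]
  split_ifs with hij
  · subst hij; simp [Function.update_self]
  · rfl

def reflEquiv (j : Fin d) : (Fin d → ℝ) ≃ᵐ (Fin d → ℝ) where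
  toEquiv := (reflCoord_involutive j).toPerm _
  measurable_toFun := (reflCoord_mp j).measurable
  measurable_invFun := (reflCoord_mp j).measurable

lemma reflCoord_embedding (j : Fin d) : MeasurableEmbedding (reflCoord j) :=
  (reflEquiv j).measurableEmbedding

/-- reflected cube -/
def reflCube (j : Fin d) (Q : Cube d) : Cube d :=
  ⟨fun i => if i = j then -(Q.corner j + Q.side) else Q.corner i, Q.side, Q.side_pos⟩

lemma reflCoord_apply_self (j : Fin d) (x : Fin d → ℝ) : reflCoord j x j = -(x j) := by
  simp [reflCoord]

lemma preimage_reflCube (j : Fin d) (Q : Cube d) :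
    reflCoord j ⁻¹' (reflCube j Q).toSet = Q.toSet := by
  ext x
  simp only [Set.mem_preimage, Cube.toSet, Set.mem_setOf_eq, reflCube]
  refine forall_congr' fun i => ?_
  by_cases hij : i = j
  · subst hij
    rw [reflCoord_apply_self]
    simp only [eq_self_iff_true, if_true]
    constructor <;> rintro ⟨h1, h2⟩ <;> constructor <;> linarith
  · simp [reflCoord, Function.update_apply, hij]

lemma preimage_upper (j : Fin d) :
    reflCoord j ⁻¹' {x : Fin d → ℝ | 0 < x j} = {x : Fin d → ℝ | x j < 0} := by
  ext x
  simp [reflCoord_apply_self]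

lemma hyperplane_null (j : Fin d) : volume {x : Fin d → ℝ | x j = 0} = 0 := by
  have hse : {x : Fin d → ℝ | x j = 0}
      = Set.univ.pi (fun i => if i = j then ({0} : Set ℝ) else Set.univ) := by
    ext x
    simp only [Set.mem_setOf_eq, Set.mem_pi, Set.mem_univ, forall_true_left]
    constructor
    · intro h i
      split_ifs with hij
      · subst hij; simpa using h
      · trivial
    · intro h
      have := h j
      simpa using this
  rw [hse, volume_pi_pi]
  refine Finset.prod_eq_zero (Finset.mem_univ j) ?_
  simp

lemma integrableOn_cube {F : (Fin d → ℝ) → ℂ} (hloc : LocallyIntegrable F volume)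
    (Q : Cube d) : IntegrableOn F Q.toSet volume := by
  have hK : IsCompact (Set.univ.pi fun i => Set.Icc (Q.corner i) (Q.corner i + Q.side)) :=
    isCompact_univ_pi fun i => isCompact_Icc
  refine (hloc.integrableOn_isCompact hK).mono_set ?_
  rw [cube_toSet_eq]
  exact Set.pi_mono fun i _ => Set.Ioo_subset_Icc_self

lemma integrableOn_cube_sub {F : (Fin d → ℝ) → ℂ} (hloc : LocallyIntegrable F volume)
    (Q : Cube d) (c : ℂ) : IntegrableOn (fun x => ‖F x - c‖) Q.toSet volume := by
  refine (((integrableOn_cube hloc Q).sub ?_)).norm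
  exact integrableOn_const (by rw [cube_volume]; exact ENNReal.ofReal_ne_top)

lemma osc_nonneg (F : (Fin d → ℝ) → ℂ) (Q : Cube d) : 0 ≤ osc F Q := by
  apply Real.sInf_nonneg
  rintro r ⟨c, rfl⟩
  exact mul_nonneg (inv_nonneg.2 (cube_vol_pos Q).le) (integral_nonneg fun x => norm_nonneg _)

lemma osc_bddBelow (F : (Fin d → ℝ) → ℂ) (Q : Cube d) :
    BddBelow {r | ∃ c : ℂ, r = (Q.vol)⁻¹ * ∫ x in Q.toSet, ‖F x - c‖} := by
  refine ⟨0, ?_⟩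
  rintro r ⟨c, rfl⟩
  exact mul_nonneg (inv_nonneg.2 (cube_vol_pos Q).le) (integral_nonneg fun x => norm_nonneg _)

lemma osc_le (F : (Fin d → ℝ) → ℂ) (Q : Cube d) (c : ℂ) :
    osc F Q ≤ (Q.vol)⁻¹ * ∫ x in Q.toSet, ‖F x - c‖ :=
  csInf_le (osc_bddBelow F Q) ⟨c, rfl⟩


/-- the `j`-th corner of the comparison cube -/
def goodCorner (j : Fin d) (Q : Cube d) : ℝ :=
  if 0 ≤ Q.corner j then Q.corner j
  else if Q.corner j + Q.side ≤ 0 then -(Q.corner j + Q.side) else 0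

/-- the comparison cube, of the same side length, lying in the closed upper half space -/
def goodCube (j : Fin d) (Q : Cube d) : Cube d :=
  ⟨fun i => if i = j then goodCorner j Q else Q.corner i, Q.side, Q.side_pos⟩

lemma subset_good_left (j : Fin d) (Q : Cube d) :
    Q.toSet ∩ {x | 0 < x j} ⊆ (goodCube j Q).toSet := by
  rintro x ⟨hx, hxU⟩ i
  simp only [goodCube]
  by_cases hij : i = j
  · subst hij
    obtain ⟨h1, h2⟩ := hx i
    have hxj : (0:ℝ) < x i := hxU
    simp only [eq_self_iff_true, if_true, goodCorner]
    split_ifs with ha hb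
    · exact ⟨h1, h2⟩
    · exfalso; linarith
    · rw [not_le] at ha hb
      constructor <;> linarith
  · simpa [hij] using hx i

lemma subset_good_right (j : Fin d) (Q : Cube d) :
    (reflCube j Q).toSet ∩ {x | 0 < x j} ⊆ (goodCube j Q).toSet := by
  rintro x ⟨hx, hxU⟩ i
  simp only [goodCube]
  by_cases hij : i = j
  · subst hij
    obtain ⟨h1, h2⟩ := hx i
    have hxj : (0:ℝ) < x i := hxU
    simp only [reflCube, eq_self_iff_true, if_true] at h1 h2
    simp only [eq_self_iff_true, if_true, goodCorner]
    split_ifs with ha hb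
    · exfalso; linarith
    · constructor <;> linarith
    · rw [not_le] at ha hb
      constructor <;> linarith
  · have := hx i
    simp only [reflCube, hij, if_false] at this
    simpa [hij] using this

lemma key_integral (j : Fin d) {F : (Fin d → ℝ) → ℂ} (hloc : LocallyIntegrable F volume)
    (Q : Cube d) (c : ℂ) :
    (∫ x in Q.toSet, ‖((if 0 < x j then F x else 0) +
        (if 0 < reflCoord j x j then F (reflCoord j x) else 0)) - c‖)
      ≤ 2 * ∫ x in (goodCube j Q).toSet, ‖F x - c‖ := by
  set U : Set (Fin d → ℝ) := {x | 0 < x j} with hUdef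
  set L : Set (Fin d → ℝ) := {x | x j < 0} with hLdef
  have hU : MeasurableSet U := measurableSet_lt measurable_const (measurable_pi_apply j)
  have hL : MeasurableSet L := measurableSet_lt (measurable_pi_apply j) measurable_const
  set G : (Fin d → ℝ) → ℂ := fun x => (if 0 < x j then F x else 0) +
      (if 0 < reflCoord j x j then F (reflCoord j x) else 0) with hGdef
  have hGU : ∀ x ∈ U, ‖G x - c‖ = ‖F x - c‖ := by
    intro x hx
    have h1 : 0 < x j := hx
    have h2 : ¬ (0 < reflCoord j x j) := by rw [reflCoord_apply_self]; linarith
    simp [hGdef, h1, h2]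
  have hGL : ∀ x ∈ L, ‖G x - c‖ = ‖F (reflCoord j x) - c‖ := by
    intro x hx
    have h1 : x j < 0 := hx
    have h2 : 0 < reflCoord j x j := by rw [reflCoord_apply_self]; linarith
    simp [hGdef, not_lt.2 h1.le, h2]
  have hae : (Q.toSet : Set (Fin d → ℝ)) =ᵐ[volume]
      (((Q.toSet ∩ U) ∪ (Q.toSet ∩ L) : Set (Fin d → ℝ))) := by
    rw [MeasureTheory.ae_eq_set]
    constructor
    · refine measure_mono_null ?_ (hyperplane_null j)
      rintro x ⟨hxQ, hxn⟩
      simp only [Set.mem_union, Set.mem_inter_iff, not_or, not_and] at hxn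
      have h1 : ¬ (0 < x j) := fun h => hxn.1 hxQ h
      have h2 : ¬ (x j < 0) := fun h => hxn.2 hxQ h
      show x j = 0
      exact le_antisymm (not_lt.1 h1) (not_lt.1 h2)
    · have he : ((Q.toSet ∩ U) ∪ (Q.toSet ∩ L)) \ Q.toSet = ∅ := by
        ext x
        simp only [Set.mem_diff, Set.mem_union, Set.mem_inter_iff, Set.mem_empty_iff_false,
          iff_false, not_and, not_not]
        rintro (⟨h, _⟩ | ⟨h, _⟩) <;> exact h
      rw [he]; exact measure_empty
  have hpre : Q.toSet ∩ L = reflCoord j ⁻¹' ((reflCube j Q).toSet ∩ U) := by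
    rw [Set.preimage_inter, preimage_reflCube, preimage_upper]
  have hintU : IntegrableOn (fun x => ‖G x - c‖) (Q.toSet ∩ U) volume := by
    refine (((integrableOn_cube_sub hloc Q c).mono_set Set.inter_subset_left).congr_fun
      (fun x hx => (hGU x hx.2).symm) ((cube_measurableSet Q).inter hU))
  have hintRefl : IntegrableOn (fun x => ‖F (reflCoord j x) - c‖) (Q.toSet ∩ L) volume := by
    rw [hpre]
    have h := (MeasurePreserving.integrableOn_comp_preimage (reflCoord_mp j)
        (reflCoord_embedding j) (f := fun y => ‖F y - c‖)
        (s := (reflCube j Q).toSet ∩ U)).2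
      ((integrableOn_cube_sub hloc (reflCube j Q) c).mono_set Set.inter_subset_left)
    simpa [Function.comp_def] using h
  have hintL : IntegrableOn (fun x => ‖G x - c‖) (Q.toSet ∩ L) volume :=
    hintRefl.congr_fun (fun x hx => (hGL x hx.2).symm) ((cube_measurableSet Q).inter hL)
  have hdisj : Disjoint (Q.toSet ∩ U) (Q.toSet ∩ L) := by
    refine Disjoint.mono Set.inter_subset_right Set.inter_subset_right ?_
    rw [Set.disjoint_left]
    intro x hx hx'
    have h1 : 0 < x j := hx
    have h2 : x j < 0 := hx'
    linarith
  calc (∫ x in Q.toSet, ‖G x - c‖)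
      = ∫ x in (Q.toSet ∩ U) ∪ (Q.toSet ∩ L), ‖G x - c‖ := setIntegral_congr_set hae
    _ = (∫ x in Q.toSet ∩ U, ‖G x - c‖) + ∫ x in Q.toSet ∩ L, ‖G x - c‖ :=
        setIntegral_union hdisj ((cube_measurableSet Q).inter hL) hintU hintL
    _ = (∫ x in Q.toSet ∩ U, ‖F x - c‖) + ∫ x in Q.toSet ∩ L, ‖F (reflCoord j x) - c‖ := by
        rw [setIntegral_congr_fun ((cube_measurableSet Q).inter hU) (fun x hx => hGU x hx.2),
          setIntegral_congr_fun ((cube_measurableSet Q).inter hL) (fun x hx => hGL x hx.2)]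
    _ = (∫ x in Q.toSet ∩ U, ‖F x - c‖) + ∫ y in (reflCube j Q).toSet ∩ U, ‖F y - c‖ := by
        rw [hpre]
        exact congrArg _ ((reflCoord_mp j).setIntegral_preimage_emb (reflCoord_embedding j)
          (fun y => ‖F y - c‖) _)
    _ ≤ (∫ x in (goodCube j Q).toSet, ‖F x - c‖) + ∫ x in (goodCube j Q).toSet, ‖F x - c‖ := by
        refine add_le_add ?_ ?_
        · exact setIntegral_mono_set (integrableOn_cube_sub hloc _ c)
            (Filter.Eventually.of_forall fun x => norm_nonneg _)
            (HasSubset.Subset.eventuallyLE (subset_good_left j Q))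
        · exact setIntegral_mono_set (integrableOn_cube_sub hloc _ c)
            (Filter.Eventually.of_forall fun x => norm_nonneg _)
            (HasSubset.Subset.eventuallyLE (subset_good_right j Q))
    _ = 2 * ∫ x in (goodCube j Q).toSet, ‖F x - c‖ := (two_mul _).symm

lemma osc_key (j : Fin d) {F : (Fin d → ℝ) → ℂ} (hloc : LocallyIntegrable F volume)
    (Q : Cube d) :
    osc (fun x => (if 0 < x j then F x else 0) +
        (if 0 < reflCoord j x j then F (reflCoord j x) else 0)) Q
      ≤ 2 * osc F (goodCube j Q) := by
  set G : (Fin d → ℝ) → ℂ := fun x => (if 0 < x j then F x else 0) +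
      (if 0 < reflCoord j x j then F (reflCoord j x) else 0) with hGdef
  have hvol : (goodCube j Q).vol = Q.vol := rfl
  have h1 : ∀ c : ℂ,
      osc G Q ≤ 2 * ((goodCube j Q).vol⁻¹ * ∫ x in (goodCube j Q).toSet, ‖F x - c‖) := by
    intro c
    refine (osc_le G Q c).trans ?_
    rw [hvol]
    have hkey : ∫ x in Q.toSet, ‖G x - c‖ ≤ 2 * ∫ x in (goodCube j Q).toSet, ‖F x - c‖ := by
      simp only [hGdef]
      exact key_integral j hloc Q c
    have hv : (0:ℝ) ≤ (Q.vol)⁻¹ := inv_nonneg.2 (cube_vol_pos Q).le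
    calc Q.vol⁻¹ * ∫ x in Q.toSet, ‖G x - c‖
        ≤ Q.vol⁻¹ * (2 * ∫ x in (goodCube j Q).toSet, ‖F x - c‖) :=
          mul_le_mul_of_nonneg_left hkey hv
      _ = 2 * (Q.vol⁻¹ * ∫ x in (goodCube j Q).toSet, ‖F x - c‖) := by ring
  have h2 : osc G Q / 2 ≤ osc F (goodCube j Q) := by
    refine le_csInf ⟨_, ⟨0, rfl⟩⟩ ?_
    rintro r ⟨c, rfl⟩
    linarith [h1 c]
  linarith

end Statement7Aux

/-- the even extension of the restriction of a `BMO` function to the upper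
half-space is in `BMO`, with `‖G‖_* ≤ 2‖F‖_*`. -/
theorem statement7 {d : ℕ} (j : Fin d) (F : (Fin d → ℝ) → ℂ)
    (hloc : LocallyIntegrable F volume) (hF : BMOStar F < ⊤) :
    BMOStar (fun x => (if 0 < x j then F x else 0) +
        (if 0 < reflCoord j x j then F (reflCoord j x) else 0)) < ⊤ ∧
    BMOStar (fun x => (if 0 < x j then F x else 0) +
        (if 0 < reflCoord j x j then F (reflCoord j x) else 0)) ≤ 2 * BMOStar F := by
  have key : ∀ Q : Cube d, ENNReal.ofReal (osc (fun x => (if 0 < x j then F x else 0) +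
      (if 0 < reflCoord j x j then F (reflCoord j x) else 0)) Q) ≤ 2 * BMOStar F := by
    intro Q
    have h1 := osc_key j hloc Q
    calc ENNReal.ofReal (osc (fun x => (if 0 < x j then F x else 0) +
          (if 0 < reflCoord j x j then F (reflCoord j x) else 0)) Q)
        ≤ ENNReal.ofReal (2 * osc F (goodCube j Q)) := ENNReal.ofReal_le_ofReal h1
      _ = 2 * ENNReal.ofReal (osc F (goodCube j Q)) := by
          rw [ENNReal.ofReal_mul (by norm_num : (0:ℝ) ≤ 2)]
          norm_num
      _ ≤ 2 * BMOStar F := by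
          refine mul_le_mul_right ?_ 2
          exact le_iSup (fun Q' : Cube d => ENNReal.ofReal (osc F Q')) (goodCube j Q)
  have h2 : BMOStar (fun x => (if 0 < x j then F x else 0) +
      (if 0 < reflCoord j x j then F (reflCoord j x) else 0)) ≤ 2 * BMOStar F := by
    rw [BMOStar]
    exact iSup_le key
  refine ⟨lt_of_le_of_lt h2 ?_, h2⟩
  exact ENNReal.mul_lt_top (by norm_num) hF
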